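/- There exist constants C_1, C_2 > 0, depending only on L̃ and r, such that for every integer m ≥ 1, every F ∈ ℂ^{N×m} and every t > 0: C_1 · 𝒲_r(F, t) ≤ 𝒦_r(F, t) ≤ C_2 · 𝒲_r(F, t). -/

import Mathlib

open Matrix

noncomputable section

/-- Euclidean (2-)norm on `ℂ^N`. -/
def cnorm2 {N : ℕ} (f : Fin N → ℂ) : ℝ := Real.sqrt (∑ i, ‖f i‖ ^ 2)

/-- The spectral operator `Σ_j c_j u_j u_j^*`. -/
def specOp {N : ℕ} (u : Fin N → Fin N → ℂ) (c : Fin N → ℂ) : Matrix (Fin N) (Fin N) ℂ :=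
  ∑ j, c j • Matrix.vecMulVec (u j) (star (u j))

/-- The graph translation operator `T_s = Σ_j e^{i s √λ_j} u_j u_j^*`. -/
def Tmat {N : ℕ} (u : Fin N → Fin N → ℂ) (lam : Fin N → ℝ) (s : ℝ) :
    Matrix (Fin N) (Fin N) ℂ :=
  specOp u (fun j => Complex.exp (Complex.I * (s : ℂ) * (Real.sqrt (lam j) : ℂ)))

/-- The `r`-th modulus of smoothness `ω_r(f,t) = sup_{|s| ≤ t} ‖(T_s - I)^r f‖₂`. -/
def omegaMod {N : ℕ} (u : Fin N → Fin N → ℂ) (lam : Fin N → ℝ) (r : ℕ) (f : Fin N → ℂ)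
    (t : ℝ) : ℝ :=
  ⨆ s : {s : ℝ // |s| ≤ t}, cnorm2 (((Tmat u lam s.1 - 1) ^ r).mulVec f)

/-- Functional calculus power `L^x = Σ_j λ_j^x u_j u_j^*` (with `0^0 = 1`). -/
def Lpow {N : ℕ} (u : Fin N → Fin N → ℂ) (lam : Fin N → ℝ) (x : ℝ) :
    Matrix (Fin N) (Fin N) ℂ :=
  specOp u (fun j => ((lam j ^ x : ℝ) : ℂ))

/-- Multichannel modulus of smoothness `𝒲_r(F, t) = Σ_{j=1}^m ω_r(f_j, t)`
(sum over the columns `f_j` of `F`). -/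
def Wcal {N m : ℕ} (u : Fin N → Fin N → ℂ) (lam : Fin N → ℝ) (r : ℕ)
    (F : Matrix (Fin N) (Fin m) ℂ) (t : ℝ) : ℝ :=
  ∑ j, omegaMod u lam r (fun i => F i j) t

/-- Multichannel `K`-functional
`𝒦_r(F, t) = inf_{g_1, …, g_m} ( Σ_j ‖f_j - g_j‖₂ + (t/2)^r Σ_j ‖L^{r/2} g_j‖₂ )`. -/
def Kcal {N m : ℕ} (u : Fin N → Fin N → ℂ) (lam : Fin N → ℝ) (r : ℕ)
    (F : Matrix (Fin N) (Fin m) ℂ) (t : ℝ) : ℝ :=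
  ⨅ G : Matrix (Fin N) (Fin m) ℂ,
    (∑ j, cnorm2 (fun i => F i j - G i j) +
      (t / 2) ^ r * ∑ j, cnorm2 ((Lpow u lam ((r : ℝ) / 2)).mulVec (fun i => G i j)))

/-!
In the eigenbasis every operator is a multiplier. Writing `f̂ = analysisMat v *ᵥ f` for the
coefficients of `f` and `θ_j = √ν_j`, the operator `(T_s - I)^r` multiplies `f̂_j` by
`(e^{i s θ_j} - 1)^r` and `L̃^{r/2}` multiplies it by `θ_j^r`. Since `|e^{ix} - 1| ≤ min(2, |x|)`,
`ω_r(f, t) ≤ 2^r (‖f - g‖ + (t/2)^r ‖L̃^{r/2} g‖)` for every `g`. Conversely, both the `K`-cost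
of `f` and `ω_r(f, t)` are comparable to `‖(w_j f̂_j)_j‖` with `w_j = min(1, tθ_j/2)^r`: taking
for `g` the projection of `f` onto the frequencies with `tθ_j ≤ 2` gives `K ≤ 2 ‖w f̂‖`, and a
single translation `s = min(t, 2/M)` with `M ≥ max θ_j` gives `c^r ‖w f̂‖ ≤ ω_r(f, t)`, because
`|e^{ix} - 1| ≥ x/2` on `[0, 2]` and the nonzero ratios `θ_j/M` are bounded below.
-/

lemma cnorm2_eq_norm_toLp {N : ℕ} (f : Fin N → ℂ) :
    cnorm2 f = ‖(WithLp.toLp 2 f : EuclideanSpace ℂ (Fin N))‖ := by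
  rw [EuclideanSpace.norm_eq]; rfl

lemma cnorm2_add_le {N : ℕ} (f g : Fin N → ℂ) : cnorm2 (f + g) ≤ cnorm2 f + cnorm2 g := by
  simpa only [cnorm2_eq_norm_toLp, WithLp.toLp_add] using norm_add_le _ _

lemma cnorm2_smul {N : ℕ} (a : ℂ) (f : Fin N → ℂ) : cnorm2 (a • f) = ‖a‖ * cnorm2 f := by
  simp only [cnorm2_eq_norm_toLp, WithLp.toLp_smul, norm_smul]

lemma cnorm2_sq {N : ℕ} (f : Fin N → ℂ) : ((cnorm2 f ^ 2 : ℝ) : ℂ) = star f ⬝ᵥ f := by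
  rw [cnorm2, Real.sq_sqrt (by positivity), dotProduct]
  push_cast
  exact Finset.sum_congr rfl fun i _ => (Complex.conj_mul' (f i)).symm

lemma cnorm2_le_of_norm_le {N : ℕ} {f g : Fin N → ℂ} (h : ∀ i, ‖f i‖ ≤ ‖g i‖) :
    cnorm2 f ≤ cnorm2 g :=
  Real.sqrt_le_sqrt <| Finset.sum_le_sum fun i _ => pow_le_pow_left₀ (norm_nonneg _) (h i) 2

lemma mul_cnorm2_mul_le {N : ℕ} {k l : ℝ} (hk : 0 ≤ k) (hl : 0 ≤ l) {a b : Fin N → ℂ}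
    (hab : ∀ j, k * ‖a j‖ ≤ l * ‖b j‖) (x : Fin N → ℂ) :
    k * cnorm2 (a * x) ≤ l * cnorm2 (b * x) := by
  have hk' : k = ‖(k : ℂ)‖ := by simp [abs_of_nonneg hk]
  have hl' : l = ‖(l : ℂ)‖ := by simp [abs_of_nonneg hl]
  rw [hk', hl', ← cnorm2_smul, ← cnorm2_smul]
  refine cnorm2_le_of_norm_le fun j => ?_
  simp only [Pi.smul_apply, Pi.mul_apply, smul_eq_mul, norm_mul, ← hk', ← hl', ← mul_assoc]
  exact mul_le_mul_of_nonneg_right (hab j) (norm_nonneg _)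

def analysisMat {N : ℕ} (v : Fin N → Fin N → ℂ) : Matrix (Fin N) (Fin N) ℂ :=
  Matrix.of fun j i => star (v j i)

lemma specOp_eq_conj {N : ℕ} (v : Fin N → Fin N → ℂ) (c : Fin N → ℂ) :
    specOp v c = (analysisMat v)ᴴ * diagonal c * analysisMat v := by
  ext i k
  rw [mul_apply]
  simp only [mul_diagonal, specOp, Matrix.sum_apply, Matrix.smul_apply, vecMulVec_apply,
    smul_eq_mul, analysisMat, conjTranspose_apply, of_apply, star_star, Pi.star_apply]
  exact Finset.sum_congr rfl fun j _ => by ring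

lemma specOp_sub {N : ℕ} (v : Fin N → Fin N → ℂ) (c d : Fin N → ℂ) :
    specOp v (c - d) = specOp v c - specOp v d := by
  simp only [specOp_eq_conj, ← Matrix.mul_sub, ← Matrix.sub_mul, diagonal_sub]
  rfl

section Orthonormal

variable {N : ℕ} {v : Fin N → Fin N → ℂ}
  (hv : ∀ i j, star (v i) ⬝ᵥ v j = if i = j then 1 else 0)
include hv

lemma analysisMat_mul_conjTranspose : analysisMat v * (analysisMat v)ᴴ = 1 := by
  ext i j
  simpa [analysisMat, mul_apply, one_apply, dotProduct] using hv i j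

lemma conjTranspose_mul_analysisMat : (analysisMat v)ᴴ * analysisMat v = 1 :=
  mul_eq_one_comm.mp (analysisMat_mul_conjTranspose hv)

lemma cnorm2_analysisMat_mulVec (f : Fin N → ℂ) : cnorm2 (analysisMat v *ᵥ f) = cnorm2 f := by
  have h : ((cnorm2 (analysisMat v *ᵥ f) ^ 2 : ℝ) : ℂ) = ((cnorm2 f ^ 2 : ℝ) : ℂ) := by
    rw [cnorm2_sq, cnorm2_sq, star_mulVec, ← dotProduct_mulVec, mulVec_mulVec,
      conjTranspose_mul_analysisMat hv, one_mulVec]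
  exact (pow_left_inj₀ (Real.sqrt_nonneg _) (Real.sqrt_nonneg _) two_ne_zero).mp
    (Complex.ofReal_injective h)

lemma analysisMat_mulVec_specOp_mulVec (c f : Fin N → ℂ) :
    analysisMat v *ᵥ (specOp v c *ᵥ f) = c * (analysisMat v *ᵥ f) := by
  rw [specOp_eq_conj, mulVec_mulVec, ← mul_assoc, ← mul_assoc, analysisMat_mul_conjTranspose hv,
    one_mul, ← mulVec_mulVec]
  ext j
  simp [mulVec_diagonal]

lemma cnorm2_specOp_mulVec (c f : Fin N → ℂ) :
    cnorm2 (specOp v c *ᵥ f) = cnorm2 (c * (analysisMat v *ᵥ f)) := by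
  rw [← cnorm2_analysisMat_mulVec hv, analysisMat_mulVec_specOp_mulVec hv]

lemma specOp_one : specOp v 1 = 1 := by
  rw [specOp_eq_conj, show diagonal (1 : Fin N → ℂ) = 1 from diagonal_one, mul_one,
    conjTranspose_mul_analysisMat hv]

lemma specOp_mul (c d : Fin N → ℂ) : specOp v c * specOp v d = specOp v (c * d) := by
  simp only [specOp_eq_conj, ← mul_assoc]
  rw [mul_assoc _ (analysisMat v), analysisMat_mul_conjTranspose hv, mul_one,
    mul_assoc _ (diagonal c), diagonal_mul_diagonal]
  rfl

lemma specOp_pow (c : Fin N → ℂ) (r : ℕ) : specOp v c ^ r = specOp v (c ^ r) := by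
  induction r with
  | zero => rw [pow_zero, pow_zero, specOp_one hv]
  | succ n ih => rw [pow_succ, ih, specOp_mul hv, pow_succ]

end Orthonormal

open Complex in
lemma norm_exp_I_mul_sub_one_le_two (x : ℝ) : ‖exp (I * x) - 1‖ ≤ 2 := by
  rw [norm_exp_I_mul_ofReal_sub_one, norm_mul, Real.norm_eq_abs, Real.norm_eq_abs, abs_two]
  linarith [Real.abs_sin_le_one (x / 2)]

open Complex in
lemma half_le_norm_exp_I_mul_sub_one {x : ℝ} (h0 : 0 ≤ x) (h2 : x ≤ 2) :
    x / 2 ≤ ‖exp (I * x) - 1‖ := by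
  have hsin : 2 / Real.pi * (x / 2) ≤ Real.sin (x / 2) :=
    Real.mul_le_sin (by positivity) (by linarith [Real.pi_gt_three])
  have hπ : x / 2 ≤ 2 / Real.pi * x := by
    rw [div_mul_eq_mul_div, le_div_iff₀ Real.pi_pos]
    nlinarith [Real.pi_lt_four]
  rw [norm_exp_I_mul_ofReal_sub_one, norm_mul, Real.norm_eq_abs, Real.norm_eq_abs, abs_two]
  linarith [le_abs_self (Real.sin (x / 2))]

open Filter Topology in
lemma exists_pos_le_of_pos {ι : Type*} [Finite ι] (θ : ι → ℝ) :
    ∃ δ > 0, ∀ j, 0 < θ j → δ ≤ θ j := by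
  have h : ∀ᶠ δ in 𝓝[>] (0 : ℝ), ∀ j, 0 < θ j → δ ≤ θ j := by
    refine eventually_all.2 fun j => ?_
    by_cases hj : 0 < θ j
    · exact (eventually_nhdsWithin_of_eventually_nhds (eventually_le_nhds hj)).mono
        fun _ hδ _ => hδ
    · exact Eventually.of_forall fun _ hj' => absurd hj' hj
  obtain ⟨δ, hδ, hδ0⟩ := (h.and self_mem_nhdsWithin).exists
  exact ⟨δ, hδ0, hδ⟩

lemma exists_phase_lower_bound {ι : Type*} [Fintype ι] (θ : ι → ℝ) (hθ : ∀ j, 0 ≤ θ j) :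
    ∃ c > 0, ∀ t, 0 ≤ t → ∃ s, |s| ≤ t ∧
      ∀ j, c * min 1 (t * θ j / 2) ≤ ‖Complex.exp (Complex.I * ↑(s * θ j)) - 1‖ := by
  obtain ⟨M, hM0, hM⟩ : ∃ M > 0, ∀ j, θ j ≤ M :=
    ⟨1 + ∑ j, θ j, add_pos_of_pos_of_nonneg one_pos (Finset.sum_nonneg fun k _ => hθ k), fun j =>
      (Finset.single_le_sum (fun k _ => hθ k) (Finset.mem_univ j)).trans
        (le_add_of_nonneg_left zero_le_one)⟩
  obtain ⟨δ, hδ0, hδ⟩ := exists_pos_le_of_pos θ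
  refine ⟨min 1 (δ / M), by positivity, fun t ht => ⟨min t (2 / M), ?_, fun j => ?_⟩⟩
  · rw [abs_of_nonneg (by positivity)]
    exact min_le_left _ _
  have hx0 : 0 ≤ min t (2 / M) * θ j := mul_nonneg (le_min ht (by positivity)) (hθ j)
  have hx2 : min t (2 / M) * θ j ≤ 2 :=
    calc min t (2 / M) * θ j ≤ 2 / M * M :=
          mul_le_mul (min_le_right _ _) (hM j) (hθ j) (by positivity)
      _ = 2 := div_mul_cancel₀ 2 hM0.ne'
  refine le_trans ?_ (half_le_norm_exp_I_mul_sub_one hx0 hx2)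
  rcases (hθ j).eq_or_lt with hj | hj
  · simp [← hj]
  rcases le_total t (2 / M) with htM | htM
  · rw [min_eq_left htM]
    calc min 1 (δ / M) * min 1 (t * θ j / 2) ≤ 1 * (t * θ j / 2) :=
          mul_le_mul (min_le_left _ _) (min_le_right _ _) (by positivity) zero_le_one
      _ = t * θ j / 2 := one_mul _
  · rw [min_eq_right htM]
    calc min 1 (δ / M) * min 1 (t * θ j / 2) ≤ δ / M * 1 :=
          mul_le_mul (min_le_right _ _) (min_le_left _ _) (by positivity) (by positivity)
      _ ≤ θ j / M := by rw [mul_one]; gcongr; exact hδ j hj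
      _ = 2 / M * θ j / 2 := by ring

def kCost {N : ℕ} (v : Fin N → Fin N → ℂ) (nu : Fin N → ℝ) (r : ℕ) (t : ℝ) (f g : Fin N → ℂ) :
    ℝ :=
  cnorm2 (f - g) + (t / 2) ^ r * cnorm2 (Lpow v nu ((r : ℝ) / 2) *ᵥ g)

def kWeight {N : ℕ} (nu : Fin N → ℝ) (r : ℕ) (t : ℝ) : Fin N → ℂ :=
  fun j => ((min 1 (t * √(nu j) / 2) : ℝ) : ℂ) ^ r

lemma Kcal_eq_iInf_sum_kCost {N m : ℕ} (v : Fin N → Fin N → ℂ) (nu : Fin N → ℝ) (r : ℕ)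
    (F : Matrix (Fin N) (Fin m) ℂ) (t : ℝ) :
    Kcal v nu r F t = ⨅ G : Matrix (Fin N) (Fin m) ℂ,
      ∑ j, kCost v nu r t (fun i => F i j) (fun i => G i j) := by
  simp only [Kcal, kCost, Finset.sum_add_distrib, Finset.mul_sum]
  rfl

lemma Lpow_natCast_div_two {N : ℕ} (v : Fin N → Fin N → ℂ) {nu : Fin N → ℝ} (hnu : ∀ j, 0 ≤ nu j)
    (r : ℕ) :
    Lpow v nu ((r : ℝ) / 2) = specOp v (fun j => (√(nu j) : ℂ) ^ r) := by
  rw [Lpow]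
  congr 1
  ext j
  rw [Real.rpow_div_two_eq_sqrt _ (hnu j), Real.rpow_natCast]
  push_cast
  rfl

lemma kCost_nonneg {N : ℕ} (v : Fin N → Fin N → ℂ) (nu : Fin N → ℝ) (r : ℕ) {t : ℝ} (ht : 0 ≤ t)
    (f g : Fin N → ℂ) : 0 ≤ kCost v nu r t f g :=
  add_nonneg (Real.sqrt_nonneg _) (mul_nonneg (by positivity) (Real.sqrt_nonneg _))

section Spectral

variable {N : ℕ} {v : Fin N → Fin N → ℂ}
  (hv : ∀ i j, star (v i) ⬝ᵥ v j = if i = j then 1 else 0) {nu : Fin N → ℝ} (r : ℕ)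
include hv

lemma Tmat_sub_one_pow (s : ℝ) :
    (Tmat v nu s - 1) ^ r =
      specOp v (fun j => (Complex.exp (Complex.I * ↑(s * √(nu j))) - 1) ^ r) := by
  rw [Tmat, ← specOp_one hv, ← specOp_sub, specOp_pow hv]
  congr 1
  ext j
  rw [Pi.pow_apply, Pi.sub_apply, Pi.one_apply, Complex.ofReal_mul, mul_assoc]

lemma cnorm2_Tmat_sub_one_pow_mulVec_le (s : ℝ) (f : Fin N → ℂ) :
    cnorm2 ((Tmat v nu s - 1) ^ r *ᵥ f) ≤ 2 ^ r * cnorm2 f := by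
  rw [Tmat_sub_one_pow hv, cnorm2_specOp_mulVec hv]
  calc _ = 1 * cnorm2 (_ * (analysisMat v *ᵥ f)) := (one_mul _).symm
    _ ≤ 2 ^ r * cnorm2 (1 * (analysisMat v *ᵥ f)) :=
        mul_cnorm2_mul_le zero_le_one (by positivity) (fun j => by
          rw [one_mul, Pi.one_apply, norm_one, mul_one, norm_pow]
          exact pow_le_pow_left₀ (norm_nonneg _) (norm_exp_I_mul_sub_one_le_two _) r) _
    _ = 2 ^ r * cnorm2 f := by rw [one_mul, cnorm2_analysisMat_mulVec hv]

lemma cnorm2_Tmat_sub_one_pow_mulVec_le_abs_pow (hnu : ∀ j, 0 ≤ nu j) (s : ℝ) (g : Fin N → ℂ) :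
    cnorm2 ((Tmat v nu s - 1) ^ r *ᵥ g) ≤ |s| ^ r * cnorm2 (Lpow v nu ((r : ℝ) / 2) *ᵥ g) := by
  rw [Tmat_sub_one_pow hv, Lpow_natCast_div_two v hnu, cnorm2_specOp_mulVec hv,
    cnorm2_specOp_mulVec hv]
  calc _ = 1 * cnorm2 (_ * (analysisMat v *ᵥ g)) := (one_mul _).symm
    _ ≤ _ := mul_cnorm2_mul_le zero_le_one (by positivity) (fun j => by
          rw [one_mul, norm_pow, norm_pow, ← mul_pow, Complex.norm_real, Real.norm_eq_abs,
            ← abs_mul, ← Real.norm_eq_abs]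
          exact pow_le_pow_left₀ (norm_nonneg _) Real.norm_exp_I_mul_ofReal_sub_one_le r) _

lemma le_omegaMod {s t : ℝ} (hs : |s| ≤ t) (f : Fin N → ℂ) :
    cnorm2 ((Tmat v nu s - 1) ^ r *ᵥ f) ≤ omegaMod v nu r f t :=
  le_ciSup (f := fun s : {s : ℝ // |s| ≤ t} => cnorm2 ((Tmat v nu s - 1) ^ r *ᵥ f))
    ⟨2 ^ r * cnorm2 f, by
      rintro _ ⟨s, rfl⟩
      exact cnorm2_Tmat_sub_one_pow_mulVec_le hv r s f⟩ ⟨s, hs⟩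

lemma omegaMod_le_two_pow_mul_kCost (hnu : ∀ j, 0 ≤ nu j) {t : ℝ} (ht : 0 ≤ t)
    (f g : Fin N → ℂ) : omegaMod v nu r f t ≤ 2 ^ r * kCost v nu r t f g := by
  have : Nonempty {s : ℝ // |s| ≤ t} := ⟨⟨0, by simpa using ht⟩⟩
  refine ciSup_le fun ⟨s, hs⟩ => ?_
  calc cnorm2 ((Tmat v nu s - 1) ^ r *ᵥ f)
      = cnorm2 ((Tmat v nu s - 1) ^ r *ᵥ (f - g) + (Tmat v nu s - 1) ^ r *ᵥ g) := by
        rw [← mulVec_add, sub_add_cancel]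
    _ ≤ 2 ^ r * cnorm2 (f - g) + |s| ^ r * cnorm2 (Lpow v nu ((r : ℝ) / 2) *ᵥ g) :=
        (cnorm2_add_le _ _).trans <| add_le_add (cnorm2_Tmat_sub_one_pow_mulVec_le hv r s _)
          (cnorm2_Tmat_sub_one_pow_mulVec_le_abs_pow hv r hnu s g)
    _ ≤ 2 ^ r * cnorm2 (f - g) + t ^ r * cnorm2 (Lpow v nu ((r : ℝ) / 2) *ᵥ g) := by
        gcongr
        exact Real.sqrt_nonneg _
    _ = 2 ^ r * kCost v nu r t f g := by
        have h2t : t ^ r = 2 ^ r * (t / 2) ^ r := by rw [← mul_pow, mul_div_cancel₀ t two_ne_zero]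
        rw [kCost, h2t]
        ring

lemma exists_kCost_le_two_mul (hnu : ∀ j, 0 ≤ nu j) {t : ℝ} (ht : 0 ≤ t) (f : Fin N → ℂ) :
    ∃ g, kCost v nu r t f g ≤ 2 * cnorm2 (kWeight nu r t * (analysisMat v *ᵥ f)) := by
  classical
  set low : Fin N → ℂ := fun j => if t * √(nu j) ≤ 2 then 1 else 0
  refine ⟨specOp v low *ᵥ f, ?_⟩
  have hhigh : cnorm2 (f - specOp v low *ᵥ f) ≤ cnorm2 (kWeight nu r t * (analysisMat v *ᵥ f)) := by
    have hsplit : f - specOp v low *ᵥ f = specOp v (1 - low) *ᵥ f := by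
      rw [specOp_sub, sub_mulVec, specOp_one hv, one_mulVec]
    rw [hsplit, cnorm2_specOp_mulVec hv]
    simpa only [one_mul] using mul_cnorm2_mul_le zero_le_one zero_le_one (fun j => by
      simp only [one_mul, Pi.sub_apply, Pi.one_apply, low, kWeight]
      split_ifs with h
      · simp
      · rw [min_eq_left (by linarith), Complex.ofReal_one, one_pow, sub_zero]) (analysisMat v *ᵥ f)
  have hlow : (t / 2) ^ r * cnorm2 (Lpow v nu ((r : ℝ) / 2) *ᵥ (specOp v low *ᵥ f))
      ≤ cnorm2 (kWeight nu r t * (analysisMat v *ᵥ f)) := by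
    rw [Lpow_natCast_div_two v hnu, cnorm2_specOp_mulVec hv, analysisMat_mulVec_specOp_mulVec hv,
      ← mul_assoc]
    simpa only [one_mul] using mul_cnorm2_mul_le (by positivity) zero_le_one (fun j => by
      simp only [one_mul, Pi.mul_apply, low, kWeight]
      split_ifs with h
      · rw [min_eq_right (by linarith), mul_one, norm_pow, norm_pow, Complex.norm_real,
          Complex.norm_real, ← mul_pow, Real.norm_of_nonneg (Real.sqrt_nonneg _),
          Real.norm_of_nonneg (by positivity)]
        exact le_of_eq (by ring)
      · simp) (analysisMat v *ᵥ f)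
  rw [kCost]
  linarith

lemma mul_cnorm2_kWeight_le_omegaMod {c s t : ℝ} (hc : 0 ≤ c) (hs : |s| ≤ t)
    (hphase : ∀ j, c * min 1 (t * √(nu j) / 2) ≤ ‖Complex.exp (Complex.I * ↑(s * √(nu j))) - 1‖)
    (f : Fin N → ℂ) :
    c ^ r * cnorm2 (kWeight nu r t * (analysisMat v *ᵥ f)) ≤ omegaMod v nu r f t := by
  have hweight : c ^ r * cnorm2 (kWeight nu r t * (analysisMat v *ᵥ f))
      ≤ cnorm2 ((Tmat v nu s - 1) ^ r *ᵥ f) := by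
    rw [Tmat_sub_one_pow hv, cnorm2_specOp_mulVec hv]
    simpa only [one_mul] using mul_cnorm2_mul_le (pow_nonneg hc r) zero_le_one (fun j => by
      have hmin : 0 ≤ min 1 (t * √(nu j) / 2) :=
        le_min zero_le_one <| div_nonneg
          (mul_nonneg ((abs_nonneg s).trans hs) (Real.sqrt_nonneg _)) zero_le_two
      rw [one_mul, kWeight, norm_pow, norm_pow, Complex.norm_real, Real.norm_of_nonneg hmin,
        ← mul_pow]
      exact pow_le_pow_left₀ (by positivity) (hphase j) r) (analysisMat v *ᵥ f)
  exact hweight.trans (le_omegaMod hv r hs f)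

lemma exists_kCost_le_div_mul_omegaMod (hnu : ∀ j, 0 ≤ nu j) {c s t : ℝ} (hc : 0 < c)
    (hs : |s| ≤ t)
    (hphase : ∀ j, c * min 1 (t * √(nu j) / 2) ≤ ‖Complex.exp (Complex.I * ↑(s * √(nu j))) - 1‖)
    (f : Fin N → ℂ) : ∃ g, kCost v nu r t f g ≤ 2 / c ^ r * omegaMod v nu r f t := by
  obtain ⟨g, hg⟩ := exists_kCost_le_two_mul hv r hnu ((abs_nonneg s).trans hs) f
  refine ⟨g, hg.trans ?_⟩
  rw [div_mul_eq_mul_div, le_div_iff₀ (by positivity)]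
  linarith [mul_cnorm2_kWeight_le_omegaMod hv r hc.le hs hphase f]

end Spectral

theorem stmt9_general (N : ℕ) (r : ℕ)
    (v : Fin N → Fin N → ℂ)
    (hv : ∀ i j, star (v i) ⬝ᵥ v j = if i = j then 1 else 0)
    (nu : Fin N → ℝ) (hnu : ∀ j, 0 ≤ nu j) :
    ∃ C1 C2 : ℝ, 0 < C1 ∧ 0 < C2 ∧
      ∀ (m : ℕ), 1 ≤ m → ∀ (F : Matrix (Fin N) (Fin m) ℂ) (t : ℝ), 0 < t →
        C1 * Wcal v nu r F t ≤ Kcal v nu r F t ∧ Kcal v nu r F t ≤ C2 * Wcal v nu r F t := by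
  obtain ⟨c, hc, hphase⟩ := exists_phase_lower_bound (fun j => √(nu j)) fun j => Real.sqrt_nonneg _
  refine ⟨(1 / 2) ^ r, 2 / c ^ r, by positivity, by positivity, fun m _ F t ht => ⟨?_, ?_⟩⟩
  · rw [Kcal_eq_iInf_sum_kCost]
    refine le_ciInf fun G => ?_
    rw [Wcal, Finset.mul_sum]
    refine Finset.sum_le_sum fun j _ => ?_
    rw [_root_.one_div_pow, one_div_mul_eq_div, div_le_iff₀' (by positivity)]
    exact omegaMod_le_two_pow_mul_kCost hv r hnu ht.le _ _
  · obtain ⟨s, hs, hsphase⟩ := hphase t ht.le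
    choose g hg using fun j =>
      exists_kCost_le_div_mul_omegaMod hv r hnu hc hs hsphase (fun i => F i j)
    have hbdd : BddBelow (Set.range fun G : Matrix (Fin N) (Fin m) ℂ =>
        ∑ j, kCost v nu r t (fun i => F i j) (fun i => G i j)) :=
      ⟨0, by rintro _ ⟨G, rfl⟩; exact Finset.sum_nonneg fun j _ => kCost_nonneg v nu r ht.le _ _⟩
    rw [Kcal_eq_iInf_sum_kCost, Wcal, Finset.mul_sum]
    exact (ciInf_le hbdd (Matrix.of fun i j => g j i)).trans (Finset.sum_le_sum fun j _ => hg j)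

/-- for a symmetric positive semidefinite `L̃` (given through its spectral
data: an orthonormal eigenbasis `v` with nonnegative eigenvalues `ν`), there exist
constants `C_1, C_2 > 0`, depending only on `L̃` and `r`, such that for every `m ≥ 1`,
every `F ∈ ℂ^{N×m}` and every `t > 0`:
`C_1 · 𝒲_r(F, t) ≤ 𝒦_r(F, t) ≤ C_2 · 𝒲_r(F, t)`. -/
theorem stmt9 (N : ℕ) (hN : 1 ≤ N) (r : ℕ)
    (v : Fin N → Fin N → ℂ)
    (hv : ∀ i j, star (v i) ⬝ᵥ v j = if i = j then 1 else 0)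
    (nu : Fin N → ℝ) (hnu : ∀ j, 0 ≤ nu j) :
    ∃ C1 C2 : ℝ, 0 < C1 ∧ 0 < C2 ∧
      ∀ (m : ℕ), 1 ≤ m → ∀ (F : Matrix (Fin N) (Fin m) ℂ) (t : ℝ), 0 < t →
        C1 * Wcal v nu r F t ≤ Kcal v nu r F t ∧ Kcal v nu r F t ≤ C2 * Wcal v nu r F t :=
  stmt9_general N r v hv nu hnu
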